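/- arXiv:2412.10911 — 3 statements merged into one kernel-verified Lean document; each statement's English description precedes it below -/
import Mathlib

section
/- Let f : ℝ × ℝ → ℝ be differentiable, let x₀, h ∈ ℝ, and suppose x¹, x* ∈ ℝ and y⁰, y* ∈ ℝ satisfy x¹ = x₀ + h·f(x¹, y⁰) and x* = x₀ + h·f(x*, y*). If 1 − h·(∂f/∂x)(c) ≠ 0 for every point c on the segment joining (x*, y*) and (x¹, y⁰) in ℝ², then there exists a point c on that segment such that x¹ − x* = ( h·(∂f/∂y)(c) / (1 − h·(∂f/∂x)(c)) )·(y⁰ − y*). -/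
/-! Both corrector solutions are fixed points of `x ↦ x₀ + h f(x, ·)`, so
`x¹ − x* = h (f(x¹, y⁰) − f(x*, y*))`. The mean value theorem on the segment writes this
difference as `f_x(c) (x¹ − x*) + f_y(c) (y⁰ − y*)`, and solving the resulting linear
equation for `x¹ − x*` gives the formula. -/

lemma ContinuousLinearMap.apply_prod_eq (L : ℝ × ℝ →L[ℝ] ℝ) (a b : ℝ) :
    L (a, b) = a * L (1, 0) + b * L (0, 1) := by
  have hab : ((a, b) : ℝ × ℝ) = a • ((1 : ℝ), (0 : ℝ)) + b • ((0 : ℝ), (1 : ℝ)) := by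
    simp
  rw [hab, map_add, map_smul, map_smul, smul_eq_mul, smul_eq_mul]

lemma exists_mem_segment_sub_eq_fderiv {E : Type*} [NormedAddCommGroup E] [NormedSpace ℝ E]
    {f : E → ℝ} (hf : Differentiable ℝ f) (p q : E) :
    ∃ c ∈ segment ℝ p q, f q - f p = fderiv ℝ f c (q - p) :=
  domain_mvt (fun c _ => (hf c).hasFDerivAt.hasFDerivWithinAt) convex_univ
    (Set.mem_univ p) (Set.mem_univ q)

lemma eq_div_mul_of_eq_mul_add {e d h p q : ℝ} (he : e = h * (e * p + d * q))
    (hp : 1 - h * p ≠ 0) : e = h * q / (1 - h * p) * d := by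
  rw [div_mul_eq_mul_div, eq_div_iff hp]
  linear_combination he

/-- Corrector-step error formula `e_x = (h·f_y)/(1 − h·f_x)·e_y` for the backward Euler
method: if `1 − h·∂f/∂x(c) ≠ 0` for every `c` on the segment joining `(x*, y*)` and
`(x¹, y⁰)`, then there is a point `c` on that segment with
`x¹ − x* = (h·∂f/∂y(c) / (1 − h·∂f/∂x(c)))·(y⁰ − y*)`. -/
theorem backward_euler_corrector_error_formula
    (f : ℝ × ℝ → ℝ) (hf : Differentiable ℝ f)
    (x₀ h x₁ xs y₀ ys : ℝ)
    (hx₁ : x₁ = x₀ + h * f (x₁, y₀))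
    (hxs : xs = x₀ + h * f (xs, ys))
    (hden : ∀ c ∈ segment ℝ ((xs, ys) : ℝ × ℝ) (x₁, y₀), 1 - h * fderiv ℝ f c (1, 0) ≠ 0) :
    ∃ c ∈ segment ℝ ((xs, ys) : ℝ × ℝ) (x₁, y₀),
      x₁ - xs = (h * fderiv ℝ f c (0, 1)) / (1 - h * fderiv ℝ f c (1, 0)) * (y₀ - ys) := by
  obtain ⟨c, hc, hmvt⟩ := exists_mem_segment_sub_eq_fderiv hf (xs, ys) (x₁, y₀)
  refine ⟨c, hc, eq_div_mul_of_eq_mul_add ?_ (hden c hc)⟩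
  rw [Prod.mk_sub_mk, ContinuousLinearMap.apply_prod_eq] at hmvt
  linear_combination hx₁ - hxs + h * hmvt
end

section
/- Let F be a real normed vector space, let h₁ > 0 and h₂ > 0, let y : ℝ → F be twice differentiable on the interval [t−h₁, t+h₂], and suppose ‖y″(s)‖ ≤ M for all s ∈ [t−h₁, t+h₂]. Define the linear extrapolation ỹ = y(t) + h₂·(y(t) − y(t−h₁))/h₁. Then ‖ỹ − y(t+h₂)‖ ≤ (M/2)·h₂·(h₁ + h₂). In particular, if h₁ = h₂ = h then ‖ỹ − y(t+h)‖ ≤ M·h², so the prediction error is O(h²). -/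
/-!
Expand `y` to first order around `t` in both directions: the forward and backward Taylor
remainders are at most `M/2 · h₂²` and `M/2 · h₁²`. The derivative terms cancel in the
extrapolation error, which is thus a combination of the two remainders with weights `h₂/h₁`
and `1`, giving `M/2 · (h₂ h₁ + h₂²)`.
-/

open Set

section Taylor

variable {E : Type*} [NormedAddCommGroup E] [NormedSpace ℝ E]
  {f f' f'' : ℝ → E} {a b M : ℝ}

theorem norm_sub_sub_smul_deriv_le_of_norm_deriv2_le (hab : a ≤ b)
    (hf : ∀ x ∈ Icc a b, HasDerivWithinAt f (f' x) (Icc a b) x)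
    (hf' : ∀ x ∈ Icc a b, HasDerivWithinAt f' (f'' x) (Icc a b) x)
    (hM : ∀ x ∈ Icc a b, ‖f'' x‖ ≤ M) :
    ‖f b - f a - (b - a) • f' a‖ ≤ M / 2 * (b - a) ^ 2 := by
  set g : ℝ → E := fun x => f x - f a - (x - a) • f' a
  have hg : ∀ x ∈ Icc a b, HasDerivWithinAt g (f' x - f' a) (Icc a b) x := fun x hx =>
    (((hf x hx).sub_const (f a)).sub
      ((((hasDerivAt_id' x).sub_const a).smul_const (f' a)).hasDerivWithinAt)).congr_deriv
      (by rw [one_smul])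
  have hg_right : ∀ x ∈ Ico a b, HasDerivWithinAt g (f' x - f' a) (Ici x) x := fun x hx =>
    (hg x (Ico_subset_Icc_self hx)).mono_of_mem_nhdsWithin (Icc_mem_nhdsGE_of_mem hx)
  have hf'_lip : ∀ x ∈ Ico a b, ‖f' x - f' a‖ ≤ M * (x - a) := fun x hx =>
    norm_image_sub_le_of_norm_deriv_le_segment' hf'
      (fun y hy => hM y (Ico_subset_Icc_self hy)) x (Ico_subset_Icc_self hx)
  have hB : ∀ x, HasDerivAt (fun x => M / 2 * (x - a) ^ 2) (M * (x - a)) x := fun x =>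
    ((((hasDerivAt_id' x).sub_const a).pow 2).const_mul (M / 2)).congr_deriv (by norm_num; ring)
  simpa [g] using image_norm_le_of_norm_deriv_right_le_deriv_boundary
    (fun x hx => (hg x hx).continuousWithinAt) hg_right (by simp [g]) hB hf'_lip
    (right_mem_Icc.2 hab)

theorem mapsTo_const_sub_Icc : MapsTo (fun s => a + b - s) (Icc a b) (Icc a b) := fun s hs => by
  simp only [mem_Icc] at hs ⊢
  constructor <;> linarith

theorem HasDerivWithinAt.comp_reflect_Icc
    (hf : ∀ x ∈ Icc a b, HasDerivWithinAt f (f' x) (Icc a b) x) :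
    ∀ x ∈ Icc a b, HasDerivWithinAt (fun s => f (a + b - s)) (-f' (a + b - x)) (Icc a b) x := by
  intro x hx
  simpa [Function.comp_def] using (hf _ (mapsTo_const_sub_Icc hx)).scomp x
    ((hasDerivAt_id x).const_sub (a + b)).hasDerivWithinAt mapsTo_const_sub_Icc

theorem norm_sub_add_smul_deriv_le_of_norm_deriv2_le (hab : a ≤ b)
    (hf : ∀ x ∈ Icc a b, HasDerivWithinAt f (f' x) (Icc a b) x)
    (hf' : ∀ x ∈ Icc a b, HasDerivWithinAt f' (f'' x) (Icc a b) x)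
    (hM : ∀ x ∈ Icc a b, ‖f'' x‖ ≤ M) :
    ‖f a - f b + (b - a) • f' b‖ ≤ M / 2 * (b - a) ^ 2 := by
  have hg' : ∀ x ∈ Icc a b,
      HasDerivWithinAt (fun s => -f' (a + b - s)) (f'' (a + b - x)) (Icc a b) x := fun x hx =>
    (HasDerivWithinAt.comp_reflect_Icc hf' x hx).neg.congr_deriv (neg_neg _)
  have h := norm_sub_sub_smul_deriv_le_of_norm_deriv2_le hab
    (HasDerivWithinAt.comp_reflect_Icc hf) hg' (fun x hx => hM _ (mapsTo_const_sub_Icc hx))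
  simpa [smul_neg, sub_neg_eq_add] using h

end Taylor

theorem norm_extrapolate_sub_le {E : Type*} [NormedAddCommGroup E] [NormedSpace ℝ E]
    {y₀ y₁ y₂ v : E} {h₁ h₂ A B : ℝ} (hh₁ : 0 < h₁) (hh₂ : 0 ≤ h₂)
    (hA : ‖y₀ - y₁ + h₁ • v‖ ≤ A) (hB : ‖y₂ - y₁ - h₂ • v‖ ≤ B) :
    ‖y₁ + (h₂ / h₁) • (y₁ - y₀) - y₂‖ ≤ h₂ / h₁ * A + B := by
  have hq : 0 ≤ h₂ / h₁ := div_nonneg hh₂ hh₁.le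
  have hsplit : y₁ + (h₂ / h₁) • (y₁ - y₀) - y₂ =
      -((h₂ / h₁) • (y₀ - y₁ + h₁ • v)) - (y₂ - y₁ - h₂ • v) := by
    rw [smul_add, smul_smul, div_mul_cancel₀ _ hh₁.ne', smul_sub, smul_sub]
    abel
  calc ‖y₁ + (h₂ / h₁) • (y₁ - y₀) - y₂‖
      ≤ ‖(h₂ / h₁) • (y₀ - y₁ + h₁ • v)‖ + ‖y₂ - y₁ - h₂ • v‖ := by
        rw [hsplit, ← norm_neg ((h₂ / h₁) • _)]
        exact norm_sub_le _ _
    _ ≤ h₂ / h₁ * A + B := by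
        rw [norm_smul, Real.norm_of_nonneg hq]
        gcongr

/-- Accuracy of the proposed algebraic prediction scheme (linear extrapolation):
if `y` is twice differentiable on `[t−h₁, t+h₂]` with `‖y″‖ ≤ M` there, and
`yPred = y(t) + h₂·(y(t) − y(t−h₁))/h₁`, then `‖yPred − y(t+h₂)‖ ≤ (M/2)·h₂·(h₁+h₂)`;
in particular for `h₁ = h₂ = h` the prediction error is at most `M·h²`. -/
theorem algebraic_prediction_accuracy
    {F : Type*} [NormedAddCommGroup F] [NormedSpace ℝ F]
    (y y' y'' : ℝ → F) (t h₁ h₂ M : ℝ) (hh₁ : 0 < h₁) (hh₂ : 0 < h₂)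
    (hy' : ∀ s ∈ Set.Icc (t - h₁) (t + h₂),
      HasDerivWithinAt y (y' s) (Set.Icc (t - h₁) (t + h₂)) s)
    (hy'' : ∀ s ∈ Set.Icc (t - h₁) (t + h₂),
      HasDerivWithinAt y' (y'' s) (Set.Icc (t - h₁) (t + h₂)) s)
    (hM : ∀ s ∈ Set.Icc (t - h₁) (t + h₂), ‖y'' s‖ ≤ M)
    (yPred : F) (hyPred : yPred = y t + (h₂ / h₁) • (y t - y (t - h₁))) :
    ‖yPred - y (t + h₂)‖ ≤ (M / 2) * h₂ * (h₁ + h₂) ∧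
      (h₁ = h₂ → ‖yPred - y (t + h₂)‖ ≤ M * h₂ ^ 2) := by
  have hfwd_sub : Icc t (t + h₂) ⊆ Icc (t - h₁) (t + h₂) := Icc_subset_Icc (by linarith) le_rfl
  have hbwd_sub : Icc (t - h₁) t ⊆ Icc (t - h₁) (t + h₂) := Icc_subset_Icc le_rfl (by linarith)
  have hfwd := norm_sub_sub_smul_deriv_le_of_norm_deriv2_le (by linarith)
    (fun x hx => (hy' x (hfwd_sub hx)).mono hfwd_sub)
    (fun x hx => (hy'' x (hfwd_sub hx)).mono hfwd_sub) (fun x hx => hM x (hfwd_sub hx))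
  have hbwd := norm_sub_add_smul_deriv_le_of_norm_deriv2_le (by linarith)
    (fun x hx => (hy' x (hbwd_sub hx)).mono hbwd_sub)
    (fun x hx => (hy'' x (hbwd_sub hx)).mono hbwd_sub) (fun x hx => hM x (hbwd_sub hx))
  simp only [add_sub_cancel_left, sub_sub_cancel] at hfwd hbwd
  have herr := norm_extrapolate_sub_le hh₁ hh₂.le hbwd hfwd
  have hbound : ‖yPred - y (t + h₂)‖ ≤ (M / 2) * h₂ * (h₁ + h₂) := by
    rw [hyPred]
    refine herr.trans_eq ?_
    field_simp
  refine ⟨hbound, fun h₁₂ => hbound.trans_eq ?_⟩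
  subst h₁₂
  ring
end

section
/- Let E and F be real normed vector spaces with E complete, let f : E × F → E satisfy ‖f(x, y) − f(x′, y′)‖ ≤ Lₓ·‖x − x′‖ + L_y·‖y − y′‖ for all x, x′ ∈ E and y, y′ ∈ F, with Lₓ, L_y ≥ 0, let h > 0 with h·Lₓ < 1, and let y : ℝ → F be twice differentiable on [t−h, t+h] with ‖y″(s)‖ ≤ M for all s ∈ [t−h, t+h]. Define the predicted algebraic value ỹ = 2·y(t) − y(t−h). Let x₀ ∈ E and suppose x¹, x* ∈ E satisfy x¹ = x₀ + h·f(x¹, ỹ) and x* = x₀ + h·f(x*, y(t+h)). Then ‖x¹ − x*‖ ≤ ( h·L_y / (1 − h·Lₓ) ) · M·h², i.e. the corrected-state error is O(h³). -/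
/-!
The exact state `xs` and the corrected state `x₁` solve the same backward-Euler equation with
algebraic inputs `y (t + h)` and `ỹ = 2 • y t - y (t - h)`. Subtracting the two equations and using
the Lipschitz bound, the state error is at most `h L_y / (1 - h Lₓ)` times the input error, since
`h Lₓ < 1` lets the `x`-term be absorbed. The input error is the second difference
`y (t + h) - 2 • y t + y (t - h)`, which is at most `M h²`: as a function of `s`,
`y (t + s) + y (t - s) - 2 • y t` vanishes at `0` and has derivative `y' (t + s) - y' (t - s)`,
of norm at most `2 M s` because `y'` is `M`-Lipschitz.
-/

open Set

section BackwardEuler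

variable {E F : Type*} [SeminormedAddCommGroup E] [NormedSpace ℝ E] [SeminormedAddCommGroup F]

theorem norm_sub_le_of_backward_euler (f : E × F → E) {Lx Ly h : ℝ}
    (hlip : ∀ x x' : E, ∀ y y' : F, ‖f (x, y) - f (x', y')‖ ≤ Lx * ‖x - x'‖ + Ly * ‖y - y'‖)
    (hh : 0 ≤ h) (hhL : h * Lx < 1) {x₀ x₁ x₂ : E} {y₁ y₂ : F}
    (hx₁ : x₁ = x₀ + h • f (x₁, y₁)) (hx₂ : x₂ = x₀ + h • f (x₂, y₂)) :
    ‖x₁ - x₂‖ ≤ h * Ly / (1 - h * Lx) * ‖y₁ - y₂‖ := by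
  have hdiff : x₁ - x₂ = h • (f (x₁, y₁) - f (x₂, y₂)) := by
    conv_lhs => rw [hx₁, hx₂]
    rw [smul_sub]
    abel
  have hbound : ‖x₁ - x₂‖ ≤ h * (Lx * ‖x₁ - x₂‖ + Ly * ‖y₁ - y₂‖) :=
    calc ‖x₁ - x₂‖ = h * ‖f (x₁, y₁) - f (x₂, y₂)‖ := by
          rw [hdiff, norm_smul, Real.norm_of_nonneg hh]
      _ ≤ h * (Lx * ‖x₁ - x₂‖ + Ly * ‖y₁ - y₂‖) := mul_le_mul_of_nonneg_left (hlip _ _ _ _) hh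
  rw [div_mul_eq_mul_div, le_div_iff₀ (by linarith)]
  linarith

end BackwardEuler

section SecondDifference

variable {F : Type*} [NormedAddCommGroup F] [NormedSpace ℝ F] {y y' y'' : ℝ → F} {t h M : ℝ}

theorem hasDerivWithinAt_comp_add_add_comp_sub
    (hy : ∀ s ∈ Icc (t - h) (t + h), HasDerivWithinAt y (y' s) (Icc (t - h) (t + h)) s)
    {s : ℝ} (hs : s ∈ Icc 0 h) :
    HasDerivWithinAt (fun s => y (t + s) + y (t - s)) (y' (t + s) - y' (t - s)) (Icc 0 h) s := by
  have hmaps_add : MapsTo (t + ·) (Icc 0 h) (Icc (t - h) (t + h)) := fun s hs =>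
    ⟨by linarith [hs.1, hs.2], by linarith [hs.2]⟩
  have hmaps_sub : MapsTo (t - ·) (Icc 0 h) (Icc (t - h) (t + h)) := fun s hs =>
    ⟨by linarith [hs.2], by linarith [hs.1, hs.2]⟩
  have hadd : HasDerivWithinAt (fun s => y (t + s)) (y' (t + s)) (Icc 0 h) s := by
    simpa [Function.comp_def] using (hy _ (hmaps_add hs)).scomp s ((hasDerivWithinAt_id s _).const_add t) hmaps_add
  have hsub : HasDerivWithinAt (fun s => y (t - s)) (-y' (t - s)) (Icc 0 h) s := by
    simpa [Function.comp_def] using (hy _ (hmaps_sub hs)).scomp s ((hasDerivWithinAt_id s _).const_sub t) hmaps_sub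
  rw [sub_eq_add_neg]
  exact hadd.add hsub

theorem norm_second_difference_le (hh : 0 ≤ h)
    (hy' : ∀ s ∈ Icc (t - h) (t + h), HasDerivWithinAt y (y' s) (Icc (t - h) (t + h)) s)
    (hy'' : ∀ s ∈ Icc (t - h) (t + h), HasDerivWithinAt y' (y'' s) (Icc (t - h) (t + h)) s)
    (hM : ∀ s ∈ Icc (t - h) (t + h), ‖y'' s‖ ≤ M) :
    ‖y (t + h) + y (t - h) - (2 : ℝ) • y t‖ ≤ M * h ^ 2 := by
  have hderiv : ∀ s ∈ Icc 0 h, HasDerivWithinAt (fun s => y (t + s) + y (t - s) - (2 : ℝ) • y t)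
      (y' (t + s) - y' (t - s)) (Icc 0 h) s := fun s hs =>
    (hasDerivWithinAt_comp_add_add_comp_sub hy' hs).sub_const _
  have hderiv_le : ∀ s ∈ Ico 0 h, ‖y' (t + s) - y' (t - s)‖ ≤ M * (2 * s) := by
    intro s hs
    have hplus : t + s ∈ Icc (t - h) (t + h) := ⟨by linarith [hs.1], by linarith [hs.2]⟩
    have hminus : t - s ∈ Icc (t - h) (t + h) := ⟨by linarith [hs.2], by linarith [hs.1]⟩
    calc ‖y' (t + s) - y' (t - s)‖ ≤ M * ‖(t + s) - (t - s)‖ :=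
          (convex_Icc _ _).norm_image_sub_le_of_norm_hasDerivWithin_le hy'' hM hminus hplus
      _ = M * (2 * s) := by
          rw [show (t + s) - (t - s) = 2 * s by ring, Real.norm_of_nonneg (by linarith [hs.1])]
  refine image_norm_le_of_norm_deriv_right_le_deriv_boundary
    (fun s hs => (hderiv s hs).continuousWithinAt) (fun s hs => ?_) ?_
    (fun s => by simpa using (hasDerivAt_pow 2 s).const_mul M) hderiv_le ⟨hh, le_rfl⟩
  · exact (hderiv s (Ico_subset_Icc_self hs)).mono_of_mem_nhdsWithin (Icc_mem_nhdsGE_of_mem hs)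
  · simp [two_smul]

end SecondDifference

theorem proposed_scheme_state_error_O_h3_general
    {E F : Type*} [NormedAddCommGroup E] [NormedSpace ℝ E]
    [NormedAddCommGroup F] [NormedSpace ℝ F]
    (f : E × F → E) (Lx Ly : ℝ) (hLy : 0 ≤ Ly)
    (hlip : ∀ x x' : E, ∀ y y' : F,
      ‖f (x, y) - f (x', y')‖ ≤ Lx * ‖x - x'‖ + Ly * ‖y - y'‖)
    (h : ℝ) (hh : 0 < h) (hhL : h * Lx < 1)
    (y y' y'' : ℝ → F) (t M : ℝ)
    (hy' : ∀ s ∈ Set.Icc (t - h) (t + h),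
      HasDerivWithinAt y (y' s) (Set.Icc (t - h) (t + h)) s)
    (hy'' : ∀ s ∈ Set.Icc (t - h) (t + h),
      HasDerivWithinAt y' (y'' s) (Set.Icc (t - h) (t + h)) s)
    (hM : ∀ s ∈ Set.Icc (t - h) (t + h), ‖y'' s‖ ≤ M)
    (yPred : F) (hyPred : yPred = (2 : ℝ) • y t - y (t - h))
    (x₀ x₁ xs : E)
    (hx₁ : x₁ = x₀ + h • f (x₁, yPred))
    (hxs : xs = x₀ + h • f (xs, y (t + h))) :
    ‖x₁ - xs‖ ≤ (h * Ly / (1 - h * Lx)) * (M * h ^ 2) := by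
  have hpred : ‖yPred - y (t + h)‖ ≤ M * h ^ 2 := by
    rw [show yPred - y (t + h) = -(y (t + h) + y (t - h) - (2 : ℝ) • y t) by rw [hyPred]; abel,
      norm_neg]
    exact norm_second_difference_le hh.le hy' hy'' hM
  have hgain : 0 ≤ h * Ly / (1 - h * Lx) := div_nonneg (by positivity) (by linarith)
  calc ‖x₁ - xs‖ ≤ h * Ly / (1 - h * Lx) * ‖yPred - y (t + h)‖ :=
        norm_sub_le_of_backward_euler f hlip hh.le hhL hx₁ hxs
    _ ≤ h * Ly / (1 - h * Lx) * (M * h ^ 2) := mul_le_mul_of_nonneg_left hpred hgain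

/-- Main accuracy result for the proposed scheme with uniform step size `h`: predicting
the algebraic variable by linear extrapolation `ỹ = 2·y(t) − y(t−h)` (which is
`O(h²)`-accurate) and using it in the backward-Euler corrector yields a corrected-state
error of at most `(h·L_y/(1 − h·Lₓ))·M·h²`, i.e. `O(h³)`. -/
theorem proposed_scheme_state_error_O_h3
    {E F : Type*} [NormedAddCommGroup E] [NormedSpace ℝ E] [CompleteSpace E]
    [NormedAddCommGroup F] [NormedSpace ℝ F]
    (f : E × F → E) (Lx Ly : ℝ) (hLx : 0 ≤ Lx) (hLy : 0 ≤ Ly)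
    (hlip : ∀ x x' : E, ∀ y y' : F,
      ‖f (x, y) - f (x', y')‖ ≤ Lx * ‖x - x'‖ + Ly * ‖y - y'‖)
    (h : ℝ) (hh : 0 < h) (hhL : h * Lx < 1)
    (y y' y'' : ℝ → F) (t M : ℝ)
    (hy' : ∀ s ∈ Set.Icc (t - h) (t + h),
      HasDerivWithinAt y (y' s) (Set.Icc (t - h) (t + h)) s)
    (hy'' : ∀ s ∈ Set.Icc (t - h) (t + h),
      HasDerivWithinAt y' (y'' s) (Set.Icc (t - h) (t + h)) s)
    (hM : ∀ s ∈ Set.Icc (t - h) (t + h), ‖y'' s‖ ≤ M)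
    (yPred : F) (hyPred : yPred = (2 : ℝ) • y t - y (t - h))
    (x₀ x₁ xs : E)
    (hx₁ : x₁ = x₀ + h • f (x₁, yPred))
    (hxs : xs = x₀ + h • f (xs, y (t + h))) :
    ‖x₁ - xs‖ ≤ (h * Ly / (1 - h * Lx)) * (M * h ^ 2) :=
  proposed_scheme_state_error_O_h3_general f Lx Ly hLy hlip h hh hhL y y' y'' t M hy' hy'' hM yPred
    hyPred x₀ x₁ xs hx₁ hxs
end
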